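/- For every M₂ > 0 there exists a constant C > 0 depending only on M₂ such that the following holds. Let d ≥ 1, 0 < m ≤ M₂, 0 < h ≤ 1/4, let S = [[2I_d, I_d],[I_d, I_d]] be the 2d×2d block matrix, and let ζ and Δ be ℝ^{2d}-valued random vectors on a common probability space with E‖ζ‖⁸ < ∞, E‖Δ‖⁸ < ∞, and conditional expectation E[Δ | ζ] = 0 almost surely. Then E[((ζ + hΔ)ᵀ S (ζ + hΔ))⁴] ≤ (1 + mh/(12M₂))·E[(ζᵀSζ)⁴] + (C·h/m³)·E‖Δ‖⁸. -/

import Mathlib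

open Matrix MeasureTheory

set_option maxHeartbeats 1600000

/-- The twisted 2d×2d block matrix `S = [[2I, I], [I, I]]`. -/
noncomputable def Smat (d : ℕ) : Matrix (Fin d ⊕ Fin d) (Fin d ⊕ Fin d) ℝ :=
  Matrix.fromBlocks ((2 : ℝ) • 1) 1 1 1

/-! ### Auxiliary algebra -/

def Tl (d : ℕ) (x : Fin d ⊕ Fin d → ℝ) : Fin d ⊕ Fin d → ℝ :=
  Sum.elim (fun i => x (Sum.inl i)) (fun i : Fin d => x (Sum.inl i) + x (Sum.inr i))

def ccoef (d : ℕ) (x : Fin d ⊕ Fin d → ℝ) : Fin d ⊕ Fin d → ℝ :=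
  Sum.elim (fun i => 2 * x (Sum.inl i) + x (Sum.inr i))
    (fun i : Fin d => x (Sum.inl i) + x (Sum.inr i))

lemma dotS (d : ℕ) (x y : Fin d ⊕ Fin d → ℝ) :
    x ⬝ᵥ (Smat d).mulVec y = ∑ j, Tl d x j * Tl d y j := by
  simp only [dotProduct, Matrix.mulVec, Smat, Tl, Fintype.sum_sum_type,
    Matrix.fromBlocks_apply₁₁, Matrix.fromBlocks_apply₁₂, Matrix.fromBlocks_apply₂₁,
    Matrix.fromBlocks_apply₂₂, Matrix.smul_apply, Matrix.one_apply, smul_eq_mul,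
    Sum.elim_inl, Sum.elim_inr]
  simp [mul_ite, Finset.sum_ite_eq, Finset.sum_add_distrib]
  ring_nf
  rw [← Finset.sum_add_distrib, ← Finset.sum_add_distrib]
  apply Finset.sum_congr rfl
  intro i _
  ring

lemma Tl_add_smul (d : ℕ) (x y : Fin d ⊕ Fin d → ℝ) (h : ℝ) (j : Fin d ⊕ Fin d) :
    Tl d (x + h • y) j = Tl d x j + h * Tl d y j := by
  cases j <;> simp [Tl] <;> ring

lemma Bsum (d : ℕ) (x y : Fin d ⊕ Fin d → ℝ) :
    ∑ j, Tl d x j * Tl d y j = ∑ j, ccoef d x j * y j := by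
  rw [Fintype.sum_sum_type, Fintype.sum_sum_type, ← Finset.sum_add_distrib,
    ← Finset.sum_add_distrib]
  apply Finset.sum_congr rfl
  intro i _
  simp only [Tl, ccoef, Sum.elim_inl, Sum.elim_inr]
  ring

lemma Q_le (d : ℕ) (x : Fin d ⊕ Fin d → ℝ) :
    ∑ j, (Tl d x j)^2 ≤ 3 * ∑ j, (x j)^2 := by
  rw [Fintype.sum_sum_type, Fintype.sum_sum_type, mul_add, Finset.mul_sum, Finset.mul_sum,
    ← Finset.sum_add_distrib, ← Finset.sum_add_distrib]
  apply Finset.sum_le_sum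
  intro i _
  simp only [Tl, Sum.elim_inl, Sum.elim_inr]
  nlinarith [sq_nonneg (x (Sum.inl i) - x (Sum.inr i))]

lemma ccoef_sq_le (d : ℕ) (x : Fin d ⊕ Fin d → ℝ) (j : Fin d ⊕ Fin d) :
    (ccoef d x j)^2 ≤ 2 * ∑ j', (Tl d x j')^2 := by
  have hsub : ∀ i : Fin d, (Tl d x (Sum.inl i))^2 + (Tl d x (Sum.inr i))^2
      ≤ ∑ j', (Tl d x j')^2 := by
    intro i
    have : ∑ j' ∈ ({Sum.inl i, Sum.inr i} : Finset (Fin d ⊕ Fin d)), (Tl d x j')^2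
        ≤ ∑ j', (Tl d x j')^2 :=
      Finset.sum_le_sum_of_subset_of_nonneg (Finset.subset_univ _)
        (fun _ _ _ => sq_nonneg _)
    rwa [Finset.sum_pair (by simp)] at this
  obtain ⟨S, hS⟩ : ∃ S, ∑ j', (Tl d x j')^2 = S := ⟨_, rfl⟩
  rw [hS] at hsub ⊢
  cases j with
  | inl i =>
      have h1 := hsub i
      simp only [Tl, Sum.elim_inl, Sum.elim_inr] at h1
      simp only [ccoef, Sum.elim_inl]
      nlinarith [sq_nonneg (x (Sum.inr i)), sq_nonneg (x (Sum.inl i))]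
  | inr i =>
      have h1 := hsub i
      simp only [Tl, Sum.elim_inl, Sum.elim_inr] at h1
      simp only [ccoef, Sum.elim_inr]
      nlinarith [sq_nonneg (x (Sum.inl i)), sq_nonneg (x (Sum.inl i) + x (Sum.inr i))]

/-! ### Scalar inequalities -/

lemma young31 (X Y : ℝ) (hX : 0 ≤ X) (hY : 0 ≤ Y) : X^3*Y ≤ X^4 + Y^4 := by
  nlinarith [sq_nonneg (X^2 - X*Y), sq_nonneg (X*Y - Y^2), sq_nonneg (X - Y),
    mul_nonneg hX hY, mul_nonneg (mul_nonneg hX hX) (mul_nonneg hX hY), sq_nonneg (X+Y)]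

lemma abs_le_of_sq_le_sq'' (x y : ℝ) (hy : 0 ≤ y) (h : x^2 ≤ y^2) : |x| ≤ y := by
  have := Real.sqrt_le_sqrt h
  rwa [Real.sqrt_sq_eq_abs, Real.sqrt_sq_eq_abs, abs_of_nonneg hy] at this

lemma ydiv (M σ τ t : ℝ) (ht : 0 < t) (key : t^3*M ≤ t^4*σ^8 + τ^8) :
    M ≤ t*σ^8 + τ^8/t^3 := by
  have hu : τ^8 = (τ^8/t^3)*t^3 := by field_simp
  nlinarith [key, hu, pow_pos ht 3]

lemma ymon62 (σ τ t : ℝ) (hσ : 0 ≤ σ) (hτ : 0 ≤ τ) (ht : 0 < t) :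
    σ^6*τ^2 ≤ t*σ^8 + τ^8/t^3 := by
  refine ydiv _ _ _ _ ht ?_
  nlinarith [young31 (t*σ^2) (τ^2) (by positivity) (sq_nonneg τ)]

lemma ymon44 (σ τ t : ℝ) (hσ : 0 ≤ σ) (hτ : 0 ≤ τ) (ht : 0 < t) (ht1 : t ≤ 1) :
    σ^4*τ^4 ≤ t*σ^8 + τ^8/t^3 := by
  refine ydiv _ _ _ _ ht ?_
  have ht2 : t^3 ≤ t^2 := pow_le_pow_of_le_one ht.le ht1 (by norm_num : (2:ℕ) ≤ 3)
  nlinarith [sq_nonneg (t^2*σ^4 - τ^4),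
    mul_le_mul_of_nonneg_right ht2 (by positivity : (0:ℝ) ≤ σ^4*τ^4),
    mul_nonneg (pow_nonneg ht.le 4) (pow_nonneg hσ 8), pow_nonneg hτ 8]

lemma ymon26 (σ τ t : ℝ) (hσ : 0 ≤ σ) (hτ : 0 ≤ τ) (ht : 0 < t) (ht1 : t ≤ 1) :
    σ^2*τ^6 ≤ t*σ^8 + τ^8/t^3 := by
  refine ydiv _ _ _ _ ht ?_
  have ht2 : t^3 ≤ t := by
    simpa using pow_le_pow_of_le_one ht.le ht1 (by norm_num : (1:ℕ) ≤ 3)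
  have h1 : (t*σ^2)*(τ^2)^3 ≤ (t*σ^2)^4 + (τ^2)^4 := by
    nlinarith [young31 (τ^2) (t*σ^2) (sq_nonneg τ) (by positivity)]
  nlinarith [h1, mul_le_mul_of_nonneg_right ht2 (by positivity : (0:ℝ) ≤ σ^2*τ^6)]

lemma ymon08 (σ τ t : ℝ) (hσ : 0 ≤ σ) (hτ : 0 ≤ τ) (ht : 0 < t) (ht1 : t ≤ 1) :
    τ^8 ≤ t*σ^8 + τ^8/t^3 := by
  refine ydiv _ _ _ _ ht ?_
  have ht2 : t^3 ≤ 1 := pow_le_one₀ ht.le ht1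
  nlinarith [mul_le_mul_of_nonneg_right ht2 (by positivity : (0:ℝ) ≤ τ^8),
    mul_nonneg (le_of_lt (pow_pos ht 4)) (by positivity : (0:ℝ) ≤ σ^8)]

lemma Gbound (σ τ : ℝ) (hσ : 0 ≤ σ) (hτ : 0 ≤ τ) :
    12*σ^6*τ^2 + 6*σ^4*(4*σ*τ+τ^2)^2 + σ^2*(4*σ*τ+τ^2)^3 + (4*σ*τ+τ^2)^4
      ≤ 4096*(σ^6*τ^2 + σ^4*τ^4 + σ^2*τ^6 + τ^8) := by
  nlinarith [mul_nonneg (mul_nonneg (pow_nonneg hσ 4) (pow_nonneg hτ 2)) (sq_nonneg (σ-τ)),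
    mul_nonneg (mul_nonneg (pow_nonneg hσ 2) (pow_nonneg hτ 4)) (sq_nonneg (σ-τ)),
    mul_nonneg (pow_nonneg hτ 6) (sq_nonneg (σ-τ)),
    mul_nonneg (mul_nonneg (pow_nonneg hσ 6) (pow_nonneg hτ 2)) (sq_nonneg 1),
    mul_nonneg (mul_nonneg (pow_nonneg hσ 4) (pow_nonneg hτ 4)) (sq_nonneg 1),
    mul_nonneg (mul_nonneg (pow_nonneg hσ 2) (pow_nonneg hτ 6)) (sq_nonneg 1),
    pow_nonneg hτ 8]

lemma key2 (M₂ m h σ τ w B : ℝ) (hM : 0 < M₂) (hm : 0 < m) (hmM : m ≤ M₂)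
    (hh : 0 < h) (hh4 : h ≤ 1/4) (hσ : 0 ≤ σ) (hτ : 0 ≤ τ)
    (hw0 : 0 ≤ w) (hw : w ≤ 3*τ^2) (hB : |B| ≤ 2*(σ*τ)) :
    (σ^2 + (2*h*B + h^2*w))^4
      ≤ σ^8 + 8*h*(σ^6*B) + (m*h/(12*M₂))*σ^8 + ((16384:ℝ)^4*1728*M₂^3*h/m^3)*τ^8 := by
  have hk : 0 < m/(12*M₂) := by positivity
  set k : ℝ := m/(12*M₂) with hk_def
  have hk1 : k ≤ 1/12 := by
    rw [hk_def, div_le_div_iff₀ (by positivity) (by norm_num)]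
    nlinarith
  have ht : 0 < k/16384 := by positivity
  set t : ℝ := k/16384 with ht_def
  have ht1 : t ≤ 1 := by rw [ht_def]; nlinarith
  set b : ℝ := 2*h*B + h^2*w with hb_def
  have hρ0 : (0:ℝ) ≤ 4*σ*τ + τ^2 := by positivity
  set ρ : ℝ := 4*σ*τ + τ^2 with hρ_def
  clear_value k t b ρ
  have hb : |b| ≤ h*ρ := by
    have h2 : |b| ≤ 2*h*|B| + h^2*w := by
      rw [hb_def]
      calc |2*h*B + h^2*w| ≤ |2*h*B| + |h^2*w| := abs_add_le _ _
        _ = 2*h*|B| + h^2*w := by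
            rw [abs_mul, abs_of_nonneg (by positivity : (0:ℝ) ≤ 2*h),
              abs_of_nonneg (mul_nonneg (sq_nonneg h) hw0)]
    have h3 : 2*h*|B| ≤ 2*h*(2*(σ*τ)) := mul_le_mul_of_nonneg_left hB (by positivity)
    have h4 : h^2*w ≤ h^2*(3*τ^2) := mul_le_mul_of_nonneg_left hw (sq_nonneg h)
    have h5 : h^2*(3*τ^2) ≤ h*τ^2 := by
      have h6 : 3*h^2 ≤ h := by nlinarith
      have := mul_le_mul_of_nonneg_right h6 (sq_nonneg τ)
      linarith [this]
    rw [hρ_def]; linarith [h2, h3, h4, h5]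
  have habs : 0 ≤ |b| := abs_nonneg b
  have hρn : 0 ≤ ρ := hρ0
  have hhρ : 0 ≤ h*ρ := mul_nonneg hh.le hρn
  have hb2 : b^2 ≤ (h*ρ)^2 := by
    have := pow_le_pow_left₀ habs hb 2
    rwa [sq_abs] at this
  have hb3 : b^3 ≤ (h*ρ)^3 := by
    calc b^3 ≤ |b^3| := le_abs_self _
      _ = |b|^3 := by rw [abs_pow]
      _ ≤ (h*ρ)^3 := pow_le_pow_left₀ habs hb 3
  have hb4 : b^4 ≤ (h*ρ)^4 := by
    calc b^4 ≤ |b^4| := le_abs_self _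
      _ = |b|^4 := by rw [abs_pow]
      _ ≤ (h*ρ)^4 := pow_le_pow_left₀ habs hb 4
  have hR : 4*h^2*σ^6*w + 6*σ^4*b^2 + 4*σ^2*b^3 + b^4
      ≤ h^2 * (12*σ^6*τ^2 + 6*σ^4*ρ^2 + σ^2*ρ^3 + ρ^4) := by
    have c1 : 4*h^2*σ^6*w ≤ h^2*(12*σ^6*τ^2) := by
      have := mul_le_mul_of_nonneg_left hw (show (0:ℝ) ≤ 4*h^2*σ^6 by positivity)
      linarith [this]
    have c2 : 6*σ^4*b^2 ≤ h^2*(6*σ^4*ρ^2) := by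
      have := mul_le_mul_of_nonneg_left hb2 (show (0:ℝ) ≤ 6*σ^4 by positivity)
      nlinarith [this]
    have c3 : 4*σ^2*b^3 ≤ h^2*(σ^2*ρ^3) := by
      have t1 := mul_le_mul_of_nonneg_left hb3 (show (0:ℝ) ≤ 4*σ^2 by positivity)
      have t2 : 4*h^3 ≤ h^2 := by nlinarith
      have t3 := mul_le_mul_of_nonneg_right t2
        (mul_nonneg (sq_nonneg σ) (pow_nonneg hρn 3))
      nlinarith [t1, t3]
    have c4 : b^4 ≤ h^2*ρ^4 := by
      have hsq : h^2 ≤ 1 := by nlinarith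
      have t2 : h^4 ≤ h^2 := by nlinarith [mul_le_mul_of_nonneg_left hsq (sq_nonneg h)]
      have t3 := mul_le_mul_of_nonneg_right t2 (pow_nonneg hρn 4)
      nlinarith [hb4, t3]
    linarith [c1, c2, c3, c4]
  have hG : 12*σ^6*τ^2 + 6*σ^4*ρ^2 + σ^2*ρ^3 + ρ^4 ≤ 16384*(t*σ^8 + τ^8/t^3) := by
    have hGb := Gbound σ τ hσ hτ
    have m62 := ymon62 σ τ t hσ hτ ht
    have m44 := ymon44 σ τ t hσ hτ ht ht1
    have m26 := ymon26 σ τ t hσ hτ ht ht1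
    have m08 := ymon08 σ τ t hσ hτ ht ht1
    rw [hρ_def]
    linarith [hGb, m62, m44, m26, m08]
  have expand : (σ^2 + b)^4
      = σ^8 + 8*h*(σ^6*B) + (4*h^2*σ^6*w + 6*σ^4*b^2 + 4*σ^2*b^3 + b^4) := by
    rw [hb_def]; ring
  rw [expand]
  have step1 : 4*h^2*σ^6*w + 6*σ^4*b^2 + 4*σ^2*b^3 + b^4
      ≤ h^2 * (16384*(t*σ^8 + τ^8/t^3)) :=
    le_trans hR (mul_le_mul_of_nonneg_left hG (sq_nonneg h))
  have e1 : h^2 * (16384*(t*σ^8 + τ^8/t^3)) = h^2*k*σ^8 + h^2*((16384:ℝ)^4/k^3)*τ^8 := by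
    rw [ht_def]; field_simp
  have e2 : h^2*k*σ^8 ≤ (m*h/(12*M₂))*σ^8 := by
    have hh2 : h^2 ≤ h := by nlinarith [mul_le_mul_of_nonneg_left hh4 hh.le]
    have t1 : h^2*k ≤ h*k := mul_le_mul_of_nonneg_right hh2 hk.le
    have hkh : h*k = m*h/(12*M₂) := by rw [hk_def]; ring
    have := mul_le_mul_of_nonneg_right t1 (pow_nonneg hσ 8)
    rw [← hkh]; linarith [this]
  have e3 : h^2*((16384:ℝ)^4/k^3)*τ^8 ≤ ((16384:ℝ)^4*1728*M₂^3*h/m^3)*τ^8 := by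
    have t1 : h^2 ≤ h := by nlinarith [mul_le_mul_of_nonneg_left hh4 hh.le]
    have hc : h^2*((16384:ℝ)^4/k^3) ≤ h*((16384:ℝ)^4/k^3) :=
      mul_le_mul_of_nonneg_right t1 (by positivity)
    have he : h*((16384:ℝ)^4/k^3) = (16384:ℝ)^4*1728*M₂^3*h/m^3 := by
      rw [hk_def]; field_simp; ring
    have := mul_le_mul_of_nonneg_right hc (pow_nonneg hτ 8)
    rw [← he]; linarith [this]
  linarith [step1, e2, e3, e1.le, e1.ge]

lemma key_pointwise (M₂ m h a w v B : ℝ) (hM : 0 < M₂) (hm : 0 < m) (hmM : m ≤ M₂)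
    (hh : 0 < h) (hh4 : h ≤ 1/4) (ha : 0 ≤ a) (hv : 0 ≤ v)
    (hw0 : 0 ≤ w) (hw : w ≤ 3*v) (hB : B^2 ≤ a*w) :
    (a + (2*h*B + h^2*w))^4
      ≤ a^4 + 8*h*(a^3*B) + (m*h/(12*M₂))*a^4 + ((16384:ℝ)^4*1728*M₂^3*h/m^3)*v^4 := by
  set σ : ℝ := Real.sqrt a with hσ_def
  set τ : ℝ := Real.sqrt v with hτ_def
  have hσ : 0 ≤ σ := Real.sqrt_nonneg a
  have hτ : 0 ≤ τ := Real.sqrt_nonneg v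
  have ea : σ^2 = a := Real.sq_sqrt ha
  have ev : τ^2 = v := Real.sq_sqrt hv
  have hB' : |B| ≤ 2*(σ*τ) := by
    apply abs_le_of_sq_le_sq'' _ _ (by positivity)
    have h1 : a*w ≤ 3*(a*v) := by nlinarith [mul_le_mul_of_nonneg_left hw ha]
    have h2 : 3*(a*v) ≤ (2*(σ*τ))^2 := by
      rw [← ea, ← ev]; nlinarith [mul_nonneg (sq_nonneg σ) (sq_nonneg τ)]
    linarith [hB, h1, h2]
  have hw' : w ≤ 3*τ^2 := by rw [ev]; exact hw
  have := key2 M₂ m h σ τ w B hM hm hmM hh hh4 hσ hτ hw0 hw' hB'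
  rw [← ea, ← ev]
  nlinarith [this]

/-! ### Conditional expectation tools -/

theorem condexp_coord_zero {α E : Type} [Fintype E] {m m0 : MeasurableSpace α}
    {μ : Measure α} (hm : m ≤ m0) [IsFiniteMeasure μ] {Δ : α → E → ℝ}
    (hΔint : Integrable Δ μ) (hce : μ[Δ|m] =ᵐ[μ] 0) (i : E)
    (hΔi : Integrable (fun ω => Δ ω i) μ) :
    μ[(fun ω => Δ ω i)|m] =ᵐ[μ] 0 := by
  haveI : IsFiniteMeasure (μ.trim hm) := isFiniteMeasure_trim hm
  have h0 : (fun _ : α => (0:ℝ)) =ᵐ[μ] μ[(fun ω => Δ ω i)|m] := by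
    refine ae_eq_condExp_of_forall_setIntegral_eq hm hΔi
      (fun s _ _ => integrableOn_zero) (fun s hs hμs => ?_)
      (StronglyMeasurable.aestronglyMeasurable stronglyMeasurable_const)
    have hΔ0 : ∫ ω in s, Δ ω ∂μ = 0 := by
      have h1 : ∫ ω in s, (μ[Δ|m]) ω ∂μ = ∫ ω in s, Δ ω ∂μ :=
        setIntegral_condExp hm hΔint hs
      have h2 : ∫ ω in s, (μ[Δ|m]) ω ∂μ = 0 := by
        rw [integral_congr_ae (ae_restrict_of_ae hce)]; simp
      rw [← h1, h2]
    have h3 := ContinuousLinearMap.integral_comp_comm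
      (ContinuousLinearMap.proj (R := ℝ) (φ := fun _ : E => ℝ) i) (hΔint.restrict (s := s))
    simp only [ContinuousLinearMap.proj_apply] at h3
    rw [integral_zero, h3, hΔ0]
    simp
  exact h0.symm

theorem integral_mul_condexp_zero {α : Type} {m m0 : MeasurableSpace α}
    {μ : Measure α} (hm : m ≤ m0) [IsFiniteMeasure μ] {F g : α → ℝ}
    (hF : StronglyMeasurable[m] F) (hce : μ[g|m] =ᵐ[μ] 0)
    (hFg : Integrable (fun ω => F ω * g ω) μ) (hg : Integrable g μ) :
    ∫ ω, F ω * g ω ∂μ = 0 := by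
  haveI : IsFiniteMeasure (μ.trim hm) := isFiniteMeasure_trim hm
  have hmul : μ[(fun ω => F ω * g ω)|m] =ᵐ[μ] fun ω => F ω * (μ[g|m]) ω :=
    condExp_mul_of_stronglyMeasurable_left hF hFg hg
  have hzero : μ[(fun ω => F ω * g ω)|m] =ᵐ[μ] 0 := by
    filter_upwards [hmul, hce] with ω h1 h2
    simp only [h1, h2, Pi.zero_apply, mul_zero]
  calc ∫ ω, F ω * g ω ∂μ = ∫ ω, (μ[(fun ω => F ω * g ω)|m]) ω ∂μ :=
        (integral_condExp hm).symm
    _ = 0 := by rw [integral_congr_ae hzero]; simp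

/-! ### Pointwise bounds for integrability -/

lemma ptA (A U : ℝ) (hA : 0 ≤ A) (hAU : A ≤ 3*U) : A^4 ≤ 81*U^4 := by
  nlinarith [pow_le_pow_left₀ hA hAU 4]

lemma ptB (A W B : ℝ) (hA : 0 ≤ A) (hW : 0 ≤ W) (hcs : B^2 ≤ A*W) :
    |A^3*B| ≤ A^4 + W^4 := by
  have hBle : |B| ≤ (A+W)/2 := by
    apply abs_le_of_sq_le_sq'' _ _ (by positivity)
    nlinarith [sq_nonneg (A - W)]
  rw [abs_mul, abs_of_nonneg (pow_nonneg hA 3)]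
  nlinarith [young31 A W hA hW, mul_le_mul_of_nonneg_left hBle (pow_nonneg hA 3),
    pow_nonneg hW 4, pow_nonneg hA 4]

lemma ptC (A U V c x : ℝ) (hA : 0 ≤ A) (hU : 0 ≤ U) (hV : 0 ≤ V) (hAU : A ≤ 3*U)
    (hc : c^2 ≤ 2*A) (hx : x^2 ≤ V) : |A^3*c*x| ≤ 162*U^4 + V^4 := by
  have h1 : |c*x| ≤ A + V/2 := by
    apply abs_le_of_sq_le_sq'' _ _ (by positivity)
    have h2 : (c*x)^2 ≤ (2*A)*V := by
      have := mul_le_mul hc hx (sq_nonneg x) (by linarith)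
      nlinarith [this]
    nlinarith [sq_nonneg (A - V/2), h2]
  have e1 : A^3*c*x = A^3*(c*x) := by ring
  rw [e1, abs_mul, abs_of_nonneg (pow_nonneg hA 3)]
  have h3 := mul_le_mul_of_nonneg_left h1 (pow_nonneg hA 3)
  nlinarith [young31 A V hA hV, ptA A U hA hAU, h3, pow_nonneg hV 4, pow_nonneg hU 4,
    pow_nonneg hA 4]

lemma pt_abs_coord (x V : ℝ) (hV : 0 ≤ V) (h : x^2 ≤ V) : |x| ≤ 1 + V^4 := by
  rcases le_total (|x|) 1 with hx | hx
  · have : (0:ℝ) ≤ V^4 := by positivity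
    linarith
  · have h1 : |x| ≤ x^2 := by nlinarith [sq_abs x, abs_nonneg x]
    have h2 : (1:ℝ) ≤ V := by nlinarith [sq_abs x]
    have h13 : (1:ℝ) ≤ V^3 := by
      nlinarith [mul_nonneg (sub_nonneg.mpr h2) (show (0:ℝ) ≤ V^2+V+1 by positivity)]
    have h3 : V ≤ V^4 := by nlinarith [mul_le_mul_of_nonneg_left h13 (by linarith : (0:ℝ) ≤ V)]
    linarith

lemma ptL (A W B U V h : ℝ) (hA : 0 ≤ A) (hW : 0 ≤ W) (hU : 0 ≤ U) (hV : 0 ≤ V)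
    (hAU : A ≤ 3*U) (hWV : W ≤ 3*V) (hcs : B^2 ≤ A*W) (hh : 0 < h) (hh4 : h ≤ 1/4) :
    (A + (2*h*B + h^2*W))^4 ≤ 20736*U^4 + 20736*V^4 := by
  have hb : |2*h*B + h^2*W| ≤ A + 2*W := by
    have h1 : |B| ≤ (A+W)/2 := by
      apply abs_le_of_sq_le_sq'' _ _ (by positivity)
      nlinarith [sq_nonneg (A - W)]
    have h2 : |2*h*B + h^2*W| ≤ 2*h*|B| + h^2*W := by
      calc |2*h*B + h^2*W| ≤ |2*h*B| + |h^2*W| := abs_add_le _ _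
        _ = 2*h*|B| + h^2*W := by
            rw [abs_mul, abs_of_nonneg (by positivity : (0:ℝ) ≤ 2*h),
              abs_of_nonneg (mul_nonneg (sq_nonneg h) hW)]
    have h3 : 2*h*|B| ≤ |B| := by nlinarith [abs_nonneg B]
    have h4 : h^2*W ≤ W := by
      have : h^2 ≤ 1 := by nlinarith
      nlinarith [mul_le_mul_of_nonneg_right this hW]
    linarith [h1, h2, h3, h4]
  have hsum : |A + (2*h*B + h^2*W)| ≤ 2*A + 2*W := by
    calc |A + (2*h*B + h^2*W)| ≤ |A| + |2*h*B + h^2*W| := abs_add_le _ _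
      _ ≤ 2*A + 2*W := by rw [abs_of_nonneg hA]; linarith [hb]
  have h5 : (A + (2*h*B + h^2*W))^4 ≤ (2*A+2*W)^4 := by
    calc (A + (2*h*B + h^2*W))^4 ≤ |(A + (2*h*B + h^2*W))^4| := le_abs_self _
      _ = |A + (2*h*B + h^2*W)|^4 := abs_pow _ _
      _ ≤ (2*A+2*W)^4 := pow_le_pow_left₀ (abs_nonneg _) hsum 4
  have h6 : (2*A+2*W)^4 ≤ (6*U+6*V)^4 := by
    apply pow_le_pow_left₀ (by linarith) (by linarith)
  have h7 : (6*U+6*V)^4 ≤ 20736*U^4 + 20736*V^4 := by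
    nlinarith [sq_nonneg (U - V), sq_nonneg (U + V), sq_nonneg (U*U - V*V),
      mul_nonneg hU hV, mul_nonneg (mul_nonneg hU hU) (mul_nonneg hU hV),
      mul_nonneg (mul_nonneg hU hV) (mul_nonneg hV hV),
      mul_nonneg (mul_nonneg hU hU) (mul_nonneg hV hV)]
  linarith

/-! ### Main theorem -/

theorem stmt_6 : ∀ M₂ : ℝ, 0 < M₂ → ∃ C : ℝ, 0 < C ∧
    ∀ d : ℕ, 1 ≤ d → ∀ m h : ℝ, 0 < m → m ≤ M₂ → 0 < h → h ≤ 1 / 4 →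
    ∀ (Ω : Type) [MeasurableSpace Ω] (μ : Measure Ω), IsProbabilityMeasure μ →
    ∀ ζ Δ : Ω → Fin d ⊕ Fin d → ℝ, Measurable ζ → Measurable Δ →
    Integrable (fun ω => (∑ i, (ζ ω i) ^ 2) ^ 4) μ →
    Integrable (fun ω => (∑ i, (Δ ω i) ^ 2) ^ 4) μ →
    μ[Δ|MeasurableSpace.comap ζ inferInstance] =ᵐ[μ] 0 →
    (∫ ω, ((ζ ω + h • Δ ω) ⬝ᵥ ((Smat d).mulVec (ζ ω + h • Δ ω))) ^ 4 ∂μ)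
      ≤ (1 + m * h / (12 * M₂)) * (∫ ω, (ζ ω ⬝ᵥ ((Smat d).mulVec (ζ ω))) ^ 4 ∂μ)
        + (C * h / m ^ 3) * ∫ ω, (∑ i, (Δ ω i) ^ 2) ^ 4 ∂μ := by
  intro M₂ hM₂
  refine ⟨(16384:ℝ)^4*1728*M₂^3, by positivity, ?_⟩
  intro d hd m h hm hmM hh hh4 Ω mΩ μ hμ ζ Δ hζm hΔm hIU hIV hce
  -- abbreviations
  set A : Ω → ℝ := fun ω => ∑ j, (Tl d (ζ ω) j)^2 with hA_def
  set W : Ω → ℝ := fun ω => ∑ j, (Tl d (Δ ω) j)^2 with hW_def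
  set Bf : Ω → ℝ := fun ω => ∑ j, Tl d (ζ ω) j * Tl d (Δ ω) j with hBf_def
  set U : Ω → ℝ := fun ω => ∑ i, (ζ ω i)^2 with hU_def
  set V : Ω → ℝ := fun ω => ∑ i, (Δ ω i)^2 with hV_def
  -- pointwise facts
  have hA0 : ∀ ω, 0 ≤ A ω := fun ω => Finset.sum_nonneg fun j _ => sq_nonneg _
  have hW0 : ∀ ω, 0 ≤ W ω := fun ω => Finset.sum_nonneg fun j _ => sq_nonneg _
  have hU0 : ∀ ω, 0 ≤ U ω := fun ω => Finset.sum_nonneg fun j _ => sq_nonneg _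
  have hV0 : ∀ ω, 0 ≤ V ω := fun ω => Finset.sum_nonneg fun j _ => sq_nonneg _
  have hAU : ∀ ω, A ω ≤ 3*U ω := fun ω => Q_le d (ζ ω)
  have hWV : ∀ ω, W ω ≤ 3*V ω := fun ω => Q_le d (Δ ω)
  have hcs : ∀ ω, (Bf ω)^2 ≤ A ω * W ω := fun ω =>
    Finset.sum_mul_sq_le_sq_mul_sq Finset.univ _ _
  -- measurability
  have hζi : ∀ i, Measurable fun ω => ζ ω i := fun i => (measurable_pi_apply i).comp hζm
  have hΔi : ∀ i, Measurable fun ω => Δ ω i := fun i => (measurable_pi_apply i).comp hΔm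
  have hTlζ : ∀ j, Measurable fun ω => Tl d (ζ ω) j := by
    intro j
    cases j with
    | inl i => simpa [Tl] using hζi (Sum.inl i)
    | inr i => simp only [Tl, Sum.elim_inr]; exact (hζi (Sum.inl i)).add (hζi (Sum.inr i))
  have hTlΔ : ∀ j, Measurable fun ω => Tl d (Δ ω) j := by
    intro j
    cases j with
    | inl i => simpa [Tl] using hΔi (Sum.inl i)
    | inr i => simp only [Tl, Sum.elim_inr]; exact (hΔi (Sum.inl i)).add (hΔi (Sum.inr i))
  have hAm : Measurable A := Finset.measurable_sum _ fun j _ => (hTlζ j).pow_const 2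
  have hWm : Measurable W := Finset.measurable_sum _ fun j _ => (hTlΔ j).pow_const 2
  have hBfm : Measurable Bf := Finset.measurable_sum _ fun j _ => (hTlζ j).mul (hTlΔ j)
  -- integrability
  have hIA4 : Integrable (fun ω => A ω^4) μ := by
    refine Integrable.mono' (hIU.const_mul 81) (hAm.pow_const 4).aestronglyMeasurable
      (ae_of_all _ fun ω => ?_)
    rw [Real.norm_eq_abs, abs_of_nonneg (by positivity)]
    exact ptA _ _ (hA0 ω) (hAU ω)
  have hIW4 : Integrable (fun ω => W ω^4) μ := by
    refine Integrable.mono' (hIV.const_mul 81) (hWm.pow_const 4).aestronglyMeasurable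
      (ae_of_all _ fun ω => ?_)
    rw [Real.norm_eq_abs, abs_of_nonneg (by positivity)]
    exact ptA _ _ (hW0 ω) (hWV ω)
  have hIABf : Integrable (fun ω => A ω^3 * Bf ω) μ := by
    refine Integrable.mono' (hIA4.add hIW4)
      (((hAm.pow_const 3).mul hBfm)).aestronglyMeasurable (ae_of_all _ fun ω => ?_)
    rw [Real.norm_eq_abs]
    exact ptB _ _ _ (hA0 ω) (hW0 ω) (hcs ω)
  have hIΔcoord : ∀ i, Integrable (fun ω => Δ ω i) μ := by
    intro i
    refine Integrable.mono' ((integrable_const (1:ℝ)).add hIV)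
      (hΔi i).aestronglyMeasurable (ae_of_all _ fun ω => ?_)
    simp only [Pi.add_apply]
    rw [Real.norm_eq_abs]
    refine pt_abs_coord _ _ (hV0 ω) ?_
    exact Finset.single_le_sum (f := fun i' => (Δ ω i')^2) (fun i' _ => sq_nonneg _)
      (Finset.mem_univ i)
  have hIΔ : Integrable Δ μ := by
    refine Integrable.mono' ((integrable_const (1:ℝ)).add hIV)
      hΔm.aestronglyMeasurable (ae_of_all _ fun ω => ?_)
    simp only [Pi.add_apply]
    refine (pi_norm_le_iff_of_nonneg (by positivity)).2 fun i => ?_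
    rw [Real.norm_eq_abs]
    refine pt_abs_coord _ _ (hV0 ω) ?_
    exact Finset.single_le_sum (f := fun i' => (Δ ω i')^2) (fun i' _ => sq_nonneg _)
      (Finset.mem_univ i)
  -- the mixed term has zero integral
  have hm0 : MeasurableSpace.comap ζ inferInstance ≤ mΩ := hζm.comap_le
  have hζ0 : @Measurable Ω _ (MeasurableSpace.comap ζ inferInstance) _ ζ :=
    fun t ht => ⟨t, ht, rfl⟩
  have hzero : ∫ ω, A ω^3 * Bf ω ∂μ = 0 := by
    have hsum : ∀ ω, A ω^3 * Bf ω = ∑ i, (A ω^3 * ccoef d (ζ ω) i) * Δ ω i := by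
      intro ω
      rw [hBf_def]
      simp only
      rw [Bsum d (ζ ω) (Δ ω), Finset.mul_sum]
      exact Finset.sum_congr rfl fun i _ => by ring
    have hccm : ∀ i, Measurable fun x : Fin d ⊕ Fin d → ℝ => ccoef d x i := by
      intro i
      cases i with
      | inl j =>
          have hmm : Measurable fun x : Fin d ⊕ Fin d → ℝ =>
              2 * x (Sum.inl j) + x (Sum.inr j) :=
            ((measurable_pi_apply (Sum.inl j)).const_mul 2).add
              (measurable_pi_apply (Sum.inr j))
          simpa [ccoef] using hmm
      | inr j =>
          have hmm : Measurable fun x : Fin d ⊕ Fin d → ℝ =>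
              x (Sum.inl j) + x (Sum.inr j) :=
            (measurable_pi_apply (Sum.inl j)).add (measurable_pi_apply (Sum.inr j))
          simpa [ccoef] using hmm
    have hTlm : ∀ j, Measurable fun x : Fin d ⊕ Fin d → ℝ => Tl d x j := by
      intro j
      cases j with
      | inl i => simpa [Tl] using measurable_pi_apply (Sum.inl i : Fin d ⊕ Fin d)
      | inr i =>
          have hmm : Measurable fun x : Fin d ⊕ Fin d → ℝ =>
              x (Sum.inl i) + x (Sum.inr i) :=
            (measurable_pi_apply (Sum.inl i)).add (measurable_pi_apply (Sum.inr i))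
          simpa [Tl] using hmm
    have hterm : ∀ i, Integrable (fun ω => (A ω^3 * ccoef d (ζ ω) i) * Δ ω i) μ := by
      intro i
      have hmeas : Measurable fun ω => (A ω^3 * ccoef d (ζ ω) i) * Δ ω i :=
        ((hAm.pow_const 3).mul ((hccm i).comp hζm)).mul (hΔi i)
      refine Integrable.mono' ((hIU.const_mul 162).add hIV)
        hmeas.aestronglyMeasurable (ae_of_all _ fun ω => ?_)
      simp only [Pi.add_apply]
      rw [Real.norm_eq_abs]
      exact ptC (A ω) (U ω) (V ω) (ccoef d (ζ ω) i) (Δ ω i) (hA0 ω) (hU0 ω) (hV0 ω)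
        (hAU ω) (ccoef_sq_le d (ζ ω) i) (Finset.single_le_sum
          (f := fun i' => (Δ ω i')^2) (fun i' _ => sq_nonneg _) (Finset.mem_univ i))
    calc ∫ ω, A ω^3 * Bf ω ∂μ
        = ∫ ω, ∑ i, (A ω^3 * ccoef d (ζ ω) i) * Δ ω i ∂μ := by
          exact integral_congr_ae (ae_of_all _ hsum)
      _ = ∑ i, ∫ ω, (A ω^3 * ccoef d (ζ ω) i) * Δ ω i ∂μ :=
          integral_finset_sum _ fun i _ => hterm i
      _ = 0 := by
          refine Finset.sum_eq_zero fun i _ => ?_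
          have hF : StronglyMeasurable[MeasurableSpace.comap ζ inferInstance]
              (fun ω => A ω^3 * ccoef d (ζ ω) i) := by
            have hG : Measurable fun x : Fin d ⊕ Fin d → ℝ =>
                (∑ j, (Tl d x j)^2)^3 * ccoef d x i :=
              ((Finset.measurable_sum _ fun j _ => (hTlm j).pow_const 2).pow_const 3).mul
                (hccm i)
            exact (hG.comp hζ0).stronglyMeasurable
          have hcei := condexp_coord_zero hm0 hIΔ hce i (hIΔcoord i)
          exact integral_mul_condexp_zero hm0 hF hcei (hterm i) (hIΔcoord i)
  -- rewrite the goal integrands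
  have hQζ : ∀ ω, ζ ω ⬝ᵥ (Smat d).mulVec (ζ ω) = A ω := by
    intro ω
    rw [dotS]
    exact Finset.sum_congr rfl fun j _ => (pow_two _).symm
  have hQz : ∀ ω, (ζ ω + h • Δ ω) ⬝ᵥ (Smat d).mulVec (ζ ω + h • Δ ω)
      = A ω + (2*h*Bf ω + h^2*W ω) := by
    intro ω
    rw [dotS]
    calc ∑ j, Tl d (ζ ω + h • Δ ω) j * Tl d (ζ ω + h • Δ ω) j
        = ∑ j, ((Tl d (ζ ω) j)^2 + (2*h*(Tl d (ζ ω) j * Tl d (Δ ω) j)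
            + h^2*(Tl d (Δ ω) j)^2)) := by
          refine Finset.sum_congr rfl fun j _ => ?_
          rw [Tl_add_smul]; ring
      _ = A ω + (2*h*Bf ω + h^2*W ω) := by
          rw [Finset.sum_add_distrib, Finset.sum_add_distrib, ← Finset.mul_sum,
            ← Finset.mul_sum]
  simp only [hQζ, hQz]
  -- right-hand side integrand
  have hRHSint : Integrable (fun ω => (1 + m*h/(12*M₂)) * A ω^4
      + (8*h*(A ω^3*Bf ω) + ((16384:ℝ)^4*1728*M₂^3*h/m^3) * V ω^4)) μ :=
    (hIA4.const_mul _).add ((hIABf.const_mul _).add (hIV.const_mul _))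
  have hmono : (∫ ω, (A ω + (2*h*Bf ω + h^2*W ω))^4 ∂μ)
      ≤ ∫ ω, ((1 + m*h/(12*M₂)) * A ω^4
        + (8*h*(A ω^3*Bf ω) + ((16384:ℝ)^4*1728*M₂^3*h/m^3) * V ω^4)) ∂μ := by
    refine integral_mono_of_nonneg (ae_of_all _ fun ω => by positivity) hRHSint
      (ae_of_all _ fun ω => ?_)
    have hwv : W ω ≤ 3*V ω := hWV ω
    have := key_pointwise M₂ m h (A ω) (W ω) (V ω) (Bf ω) hM₂ hm hmM hh hh4
      (hA0 ω) (hV0 ω) (hW0 ω) hwv (hcs ω)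
    linarith [this]
  have hsplit : ∫ ω, ((1 + m*h/(12*M₂)) * A ω^4
      + (8*h*(A ω^3*Bf ω) + ((16384:ℝ)^4*1728*M₂^3*h/m^3) * V ω^4)) ∂μ
      = (1 + m*h/(12*M₂)) * (∫ ω, A ω^4 ∂μ)
        + (8*h*(∫ ω, A ω^3*Bf ω ∂μ)
          + ((16384:ℝ)^4*1728*M₂^3*h/m^3) * ∫ ω, V ω^4 ∂μ) := by
    have hI2 : Integrable (fun ω => 8*h*(A ω^3*Bf ω)) μ := hIABf.const_mul _
    have hI3 : Integrable (fun ω => ((16384:ℝ)^4*1728*M₂^3*h/m^3) * V ω^4) μ :=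
      hIV.const_mul _
    have hI23 : Integrable (fun ω => 8*h*(A ω^3*Bf ω)
        + ((16384:ℝ)^4*1728*M₂^3*h/m^3) * V ω^4) μ := hI2.add hI3
    have hI1 : Integrable (fun ω => (1 + m*h/(12*M₂)) * A ω^4) μ := hIA4.const_mul _
    rw [integral_add hI1 hI23, integral_add hI2 hI3,
      integral_const_mul, integral_const_mul, integral_const_mul]
  rw [hsplit, hzero] at hmono
  simp only [mul_zero, zero_add] at hmono
  calc (∫ ω, (A ω + (2*h*Bf ω + h^2*W ω))^4 ∂μ)
      ≤ (1 + m*h/(12*M₂)) * (∫ ω, A ω^4 ∂μ)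
        + (0 + ((16384:ℝ)^4*1728*M₂^3*h/m^3) * ∫ ω, V ω^4 ∂μ) := by
        simpa using hmono
    _ = (1 + m*h/(12*M₂)) * (∫ ω, A ω^4 ∂μ)
        + ((16384:ℝ)^4*1728*M₂^3*h/m^3) * ∫ ω, V ω^4 ∂μ := by ring
    _ = (1 + m*h/(12*M₂)) * (∫ ω, A ω^4 ∂μ)
        + ((16384:ℝ)^4*1728*M₂^3)*h/m^3 * ∫ ω, V ω^4 ∂μ := by ring
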